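/- Let ℓ > 0, let R = [a, a+ℓ] × [b, b+ℓ] be an axis-aligned square in ℝ², and let TL(R) = [a−2ℓ, a+3ℓ] × [b−2ℓ, b+3ℓ]. Let S be a finite set of points in ℝ² with S ∩ R ≠ ∅. Then for every point q ∈ R and every s ∈ S, the following are equivalent: (i) q lies in the Voronoi region of s with respect to S, i.e., dist(q, s) ≤ dist(q, t) for all t ∈ S; (ii) s ∈ TL(R) and dist(q, s) ≤ dist(q, t) for all t ∈ S ∩ TL(R). In other words, the Voronoi diagram of S within R is determined by the points of S in TL(R). -/

import Mathlib

/-- The Euclidean plane. -/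
abbrev E2 := EuclideanSpace ℝ (Fin 2)

/-- The closed axis-aligned square `[a, a+ℓ] × [b, b+ℓ]`. -/
def square (a b ℓ : ℝ) : Set E2 :=
  {p | p 0 ∈ Set.Icc a (a + ℓ) ∧ p 1 ∈ Set.Icc b (b + ℓ)}

/-- For the square `R = [a, a+ℓ] × [b, b+ℓ]`, the concentric square
`TL(R) = [a−2ℓ, a+3ℓ] × [b−2ℓ, b+3ℓ]` of side `5ℓ`. -/
def TL (a b ℓ : ℝ) : Set E2 := square (a - 2*ℓ) (b - 2*ℓ) (5*ℓ)

/-! A site `p ∈ S` within distance `r` of `q` bounds the distance from `q` to its nearest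
sites by `r`, so only the sites in `closedBall q r` compete for `q`. For `q` in the square
`R` of side `ℓ`, any site in `R` is within `2ℓ` of `q`, and `closedBall q (2ℓ) ⊆ TL(R)`. -/

lemma forall_dist_le_iff_of_closedBall_subset {α : Type*} [PseudoMetricSpace α]
    {S T : Set α} {p q s : α} {r : ℝ} (hp : p ∈ S) (hqp : dist q p ≤ r)
    (hT : Metric.closedBall q r ⊆ T) :
    (∀ t ∈ S, dist q s ≤ dist q t) ↔ (s ∈ T ∧ ∀ t ∈ S, t ∈ T → dist q s ≤ dist q t) := by
  have hpT : p ∈ T := hT (Metric.mem_closedBall'.2 hqp)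
  constructor
  · intro h
    exact ⟨hT (Metric.mem_closedBall'.2 ((h p hp).trans hqp)), fun t ht _ => h t ht⟩
  · rintro ⟨-, h⟩ t ht
    by_cases htT : t ∈ T
    · exact h t ht htT
    · have hrt : r < dist q t := by
        by_contra! htr
        exact htT (hT (Metric.mem_closedBall'.2 htr))
      linarith [h p hp hpT]

lemma EuclideanSpace.dist_le_sqrt_card_mul {ι : Type*} [Fintype ι]
    {x y : EuclideanSpace ℝ ι} {r : ℝ} (hr : 0 ≤ r) (h : ∀ i, dist (x i) (y i) ≤ r) :
    dist x y ≤ √(Fintype.card ι) * r := by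
  rw [EuclideanSpace.dist_eq, ← Real.sqrt_sq hr, ← Real.sqrt_mul (Nat.cast_nonneg _)]
  gcongr
  calc ∑ i, dist (x i) (y i) ^ 2 ≤ ∑ _i : ι, r ^ 2 :=
        Finset.sum_le_sum fun i _ => pow_le_pow_left₀ dist_nonneg (h i) 2
    _ = Fintype.card ι * r ^ 2 := by simp

lemma dist_le_of_mem_square {a b ℓ : ℝ} {p q : E2} (hp : p ∈ square a b ℓ)
    (hq : q ∈ square a b ℓ) : dist p q ≤ 2 * ℓ := by
  obtain ⟨⟨hp0, hp0'⟩, hp1, hp1'⟩ := hp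
  obtain ⟨⟨hq0, hq0'⟩, hq1, hq1'⟩ := hq
  have hℓ : 0 ≤ ℓ := by linarith
  have hcoord : ∀ i, dist (p i) (q i) ≤ ℓ := Fin.forall_fin_two.2
    ⟨abs_sub_le_iff.2 ⟨by linarith, by linarith⟩, abs_sub_le_iff.2 ⟨by linarith, by linarith⟩⟩
  have hsqrt_two : √(2 : ℝ) ≤ 2 := Real.sqrt_le_iff.2 ⟨by norm_num, by norm_num⟩
  calc dist p q ≤ √(2 : ℝ) * ℓ := by
        simpa using EuclideanSpace.dist_le_sqrt_card_mul hℓ hcoord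
    _ ≤ 2 * ℓ := by gcongr

lemma closedBall_subset_TL {a b ℓ : ℝ} {q : E2} (hq : q ∈ square a b ℓ) :
    Metric.closedBall q (2 * ℓ) ⊆ TL a b ℓ := by
  intro t ht
  have hcoord (i : Fin 2) : |q i - t i| ≤ 2 * ℓ :=
    (PiLp.dist_apply_le q t i).trans (Metric.mem_closedBall'.1 ht)
  obtain ⟨⟨hq0, hq0'⟩, hq1, hq1'⟩ := hq
  have h0 := abs_sub_le_iff.1 (hcoord 0)
  have h1 := abs_sub_le_iff.1 (hcoord 1)
  refine ⟨⟨?_, ?_⟩, ?_, ?_⟩ <;> linarith [h0.1, h0.2, h1.1, h1.2]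

theorem stmt_3_general (ℓ a b : ℝ) (S : Finset E2)
    (hSR : ∃ p ∈ S, p ∈ square a b ℓ) (q : E2) (hq : q ∈ square a b ℓ)
    (s : E2) :
    (∀ t ∈ S, dist q s ≤ dist q t) ↔
      (s ∈ TL a b ℓ ∧ ∀ t ∈ S, t ∈ TL a b ℓ → dist q s ≤ dist q t) := by
  obtain ⟨p, hpS, hp⟩ := hSR
  exact forall_dist_le_iff_of_closedBall_subset (S := (S : Set E2)) hpS
    (dist_le_of_mem_square hq hp) (closedBall_subset_TL hq)

theorem stmt_3 (ℓ a b : ℝ) (hℓ : 0 < ℓ) (S : Finset E2)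
    (hSR : ∃ p ∈ S, p ∈ square a b ℓ) (q : E2) (hq : q ∈ square a b ℓ)
    (s : E2) (hs : s ∈ S) :
    (∀ t ∈ S, dist q s ≤ dist q t) ↔
      (s ∈ TL a b ℓ ∧ ∀ t ∈ S, t ∈ TL a b ℓ → dist q s ≤ dist q t) :=
  stmt_3_general ℓ a b S hSR q hq s
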